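/- If a picture p is tessellated by pictures of DC₁ (i.e., its cell set can be partitioned into rectangular domains each of whose induced subpictures is in DC₁), then p itself is in DC₁. -/

import Mathlib

/-- The alphabet Δ₁ = {a, b, c, d}. -/
inductive Del : Type
  | a | b | c | d
deriving DecidableEq

/-- Row cancellation: pairs [a,b] and [c,d]. -/
def rowStep (w w' : List Del) : Prop :=
  ∃ (u v : List Del),
    (w = u ++ [Del.a, Del.b] ++ v ∨ w = u ++ [Del.c, Del.d] ++ v) ∧ w' = u ++ v

/-- The row Dyck language D^Row. -/
def DRow (w : List Del) : Prop := Relation.ReflTransGen rowStep w []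

/-- Column cancellation: pairs [a,c] and [b,d]. -/
def colStep (w w' : List Del) : Prop :=
  ∃ (u v : List Del),
    (w = u ++ [Del.a, Del.c] ++ v ∨ w = u ++ [Del.b, Del.d] ++ v) ∧ w' = u ++ v

/-- The column Dyck language D^Col. -/
def DCol (w : List Del) : Prop := Relation.ReflTransGen colStep w []

/-- Row i (of length n) of a picture. -/
def row (p : ℕ → ℕ → Del) (n i : ℕ) : List Del := (List.range n).map (p i)

/-- Column j (of length m) of a picture. -/
def col (p : ℕ → ℕ → Del) (m j : ℕ) : List Del :=
  (List.range m).map (fun i => p i j)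

/-- The Dyck crossword language DC₁: nonempty pictures all of whose rows
are in D^Row and all of whose columns are in D^Col. -/
def DC (m n : ℕ) (p : ℕ → ℕ → Del) : Prop :=
  1 ≤ m ∧ 1 ≤ n ∧ (∀ i < m, DRow (row p n i)) ∧ (∀ j < n, DCol (col p m j))

/-- A domain `(i, j, i', j')` of a picture contains cell `(r, s)` iff
`i ≤ r ≤ i'` and `j ≤ s ≤ j'`. -/
def inDom (d : ℕ × ℕ × ℕ × ℕ) (r s : ℕ) : Prop :=
  d.1 ≤ r ∧ r ≤ d.2.2.1 ∧ d.2.1 ≤ s ∧ s ≤ d.2.2.2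

/-- The subpicture of `p` determined by a domain. -/
def subpic (p : ℕ → ℕ → Del) (d : ℕ × ℕ × ℕ × ℕ) : ℕ → ℕ → Del :=
  fun r s => p (d.1 + r) (d.2.1 + s)

/-!
Each row of the picture is cut by the tessellation into consecutive segments, each of which is a
row of one tile, hence a Dyck word; since the row Dyck language is closed under concatenation,
the whole row is a Dyck word. The same holds for columns, which are the rows of the transposed
picture and tessellation.
-/

open Relation

theorem reflTransGen_nil_append {α : Type*} {r : List α → List α → Prop}
    (hr : ∀ {w w'} (x : List α), r w w' → r (w ++ x) (w' ++ x)) {u v : List α}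
    (hu : ReflTransGen r u []) (hv : ReflTransGen r v []) : ReflTransGen r (u ++ v) [] :=
  (hu.lift (· ++ v) fun _ _ h => hr v h).trans hv

theorem rowStep_append_right {w w' : List Del} (x : List Del) (h : rowStep w w') :
    rowStep (w ++ x) (w' ++ x) := by
  obtain ⟨u, v, hw, rfl⟩ := h
  exact ⟨u, v ++ x, by rcases hw with rfl | rfl <;> simp⟩

theorem colStep_append_right {w w' : List Del} (x : List Del) (h : colStep w w') :
    colStep (w ++ x) (w' ++ x) := by
  obtain ⟨u, v, hw, rfl⟩ := h
  exact ⟨u, v ++ x, by rcases hw with rfl | rfl <;> simp⟩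

theorem DRow.append {u v : List Del} (hu : DRow u) (hv : DRow v) : DRow (u ++ v) :=
  reflTransGen_nil_append rowStep_append_right hu hv

theorem DCol.append {u v : List Del} (hu : DCol u) (hv : DCol v) : DCol (u ++ v) :=
  reflTransGen_nil_append colStep_append_right hu hv

def IsCut (I : Set (ℕ × ℕ)) (s : ℕ) : Prop := ∀ J ∈ I, J.1 < s → J.2 < s

section IntervalPartition

variable {α : Type*} {L : List α → Prop} (hnil : L [])
  (happ : ∀ u v, L u → L v → L (u ++ v)) (f : ℕ → α) {n : ℕ} {I : Set (ℕ × ℕ)}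
  (hlt : ∀ J ∈ I, J.2 < n)
  (hcover : ∀ s < n, ∃! J, J ∈ I ∧ J.1 ≤ s ∧ s ≤ J.2)
  (hseg : ∀ J ∈ I, L ((List.range' J.1 (J.2 - J.1 + 1)).map f))
include hnil happ hlt hcover hseg

theorem map_range'_mem_of_isCut (s : ℕ) (hs : IsCut I s) :
    L ((List.range' s (n - s)).map f) := by
  by_cases hsn : s < n
  · obtain ⟨J, ⟨hJ, hJs, hsJ⟩, -⟩ := hcover s hsn
    have hJ₁ : J.1 = s := le_antisymm hJs (not_lt.mp fun h => (hs J hJ h).not_ge hsJ)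
    have hlast : IsCut I (J.2 + 1) := fun J' hJ' h => by
      by_contra! hge
      have : J' = J := (hcover J.2 (hlt J hJ)).unique ⟨hJ', by omega, by omega⟩
        ⟨hJ, hJs.trans hsJ, le_rfl⟩
      subst this
      omega
    have hsplit : List.range' s (n - s) =
        List.range' J.1 (J.2 - J.1 + 1) ++ List.range' (J.2 + 1) (n - (J.2 + 1)) := by
      have := hlt J hJ
      rw [hJ₁, show J.2 + 1 = s + 1 * (J.2 - s + 1) by omega, List.range'_append]
      congr 1
      omega
    rw [hsplit, List.map_append]
    exact happ _ _ (hseg J hJ) (map_range'_mem_of_isCut (J.2 + 1) hlast)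
  · simpa [Nat.sub_eq_zero_of_le (not_lt.mp hsn)] using hnil
termination_by n - s
decreasing_by
  have := hlt J hJ
  omega

theorem map_range_mem_of_interval_partition : L ((List.range n).map f) := by
  simpa [List.range_eq_range'] using
    map_range'_mem_of_isCut hnil happ f hlt hcover hseg 0 fun _ _ h => absurd h (Nat.not_lt_zero _)

end IntervalPartition

def rowSlice (ds : Set (ℕ × ℕ × ℕ × ℕ)) (i : ℕ) : Set (ℕ × ℕ) :=
  {J | ∃ d ∈ ds, d.1 ≤ i ∧ i ≤ d.2.2.1 ∧ J = (d.2.1, d.2.2.2)}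

theorem existsUnique_mem_rowSlice {m n : ℕ} {ds : Set (ℕ × ℕ × ℕ × ℕ)}
    (hpart : ∀ r < m, ∀ s < n, ∃! d, d ∈ ds ∧ inDom d r s) {i : ℕ} (hi : i < m) :
    ∀ s < n, ∃! J, J ∈ rowSlice ds i ∧ J.1 ≤ s ∧ s ≤ J.2 := by
  intro s hs
  obtain ⟨d, ⟨hd, hi₁, hi₂, hs₁, hs₂⟩, huniq⟩ := hpart i hi s hs
  refine ⟨(d.2.1, d.2.2.2), ⟨⟨d, hd, hi₁, hi₂, rfl⟩, hs₁, hs₂⟩, ?_⟩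
  rintro _ ⟨⟨d', hd', hi₁', hi₂', rfl⟩, hs₁', hs₂'⟩
  rw [huniq d' ⟨hd', hi₁', hi₂', hs₁', hs₂'⟩]

theorem row_mem_of_tessellation {L : List Del → Prop} (hnil : L [])
    (happ : ∀ u v, L u → L v → L (u ++ v)) {m n : ℕ} {p : ℕ → ℕ → Del}
    {ds : Set (ℕ × ℕ × ℕ × ℕ)} (hlt : ∀ d ∈ ds, d.2.2.2 < n)
    (hpart : ∀ r < m, ∀ s < n, ∃! d, d ∈ ds ∧ inDom d r s)
    (hseg : ∀ d ∈ ds, ∀ i, d.1 ≤ i → i ≤ d.2.2.1 →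
      L ((List.range' d.2.1 (d.2.2.2 - d.2.1 + 1)).map (p i)))
    {i : ℕ} (hi : i < m) : L (row p n i) := by
  refine map_range_mem_of_interval_partition hnil happ (p i) ?_
    (existsUnique_mem_rowSlice hpart hi) ?_
  · rintro _ ⟨d, hd, -, -, rfl⟩
    exact hlt d hd
  · rintro _ ⟨d, hd, hi₁, hi₂, rfl⟩
    exact hseg d hd i hi₁ hi₂

theorem row_subpic (p : ℕ → ℕ → Del) (d : ℕ × ℕ × ℕ × ℕ) (k r : ℕ) :
    row (subpic p d) k r = (List.range' d.2.1 k).map (p (d.1 + r)) := by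
  simp [row, subpic, List.range'_eq_map_range, Function.comp_def]

theorem col_subpic (p : ℕ → ℕ → Del) (d : ℕ × ℕ × ℕ × ℕ) (k r : ℕ) :
    col (subpic p d) k r = (List.range' d.1 k).map (fun i => p i (d.2.1 + r)) := by
  simp [col, subpic, List.range'_eq_map_range, Function.comp_def]

def transposeDom (d : ℕ × ℕ × ℕ × ℕ) : ℕ × ℕ × ℕ × ℕ :=
  (d.2.1, d.1, d.2.2.2, d.2.2.1)

theorem transposeDom_transposeDom (d : ℕ × ℕ × ℕ × ℕ) :
    transposeDom (transposeDom d) = d :=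
  rfl

theorem inDom_transposeDom {d : ℕ × ℕ × ℕ × ℕ} {r s : ℕ} :
    inDom (transposeDom d) s r ↔ inDom d r s := by
  simp only [inDom, transposeDom]
  tauto

theorem existsUnique_transposeDom {m n : ℕ} {ds : Set (ℕ × ℕ × ℕ × ℕ)}
    (hpart : ∀ r < m, ∀ s < n, ∃! d, d ∈ ds ∧ inDom d r s) :
    ∀ s < n, ∀ r < m, ∃! d, d ∈ transposeDom ⁻¹' ds ∧ inDom d s r := by
  intro s hs r hr
  obtain ⟨d, ⟨hd, hdom⟩, huniq⟩ := hpart r hr s hs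
  refine ⟨transposeDom d, ⟨hd, inDom_transposeDom.mpr hdom⟩, fun d' ⟨hd', hdom'⟩ => ?_⟩
  rw [← huniq _ ⟨hd', inDom_transposeDom.mp hdom'⟩, transposeDom_transposeDom]

/-- If a picture is tessellated by DC₁ pictures (its cells are partitioned
into rectangular domains whose induced subpictures all lie in DC₁),
then the picture itself is in DC₁. -/
theorem DC_closed_under_tessellation (m n : ℕ) (hm : 1 ≤ m) (hn : 1 ≤ n)
    (p : ℕ → ℕ → Del) (ds : Set (ℕ × ℕ × ℕ × ℕ))
    (hbounds : ∀ d ∈ ds, d.1 ≤ d.2.2.1 ∧ d.2.2.1 < m ∧ d.2.1 ≤ d.2.2.2 ∧ d.2.2.2 < n)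
    (hpart : ∀ r < m, ∀ s < n, ∃! d, d ∈ ds ∧ inDom d r s)
    (hsub : ∀ d ∈ ds, DC (d.2.2.1 - d.1 + 1) (d.2.2.2 - d.2.1 + 1) (subpic p d)) :
    DC m n p := by
  refine ⟨hm, hn, fun i hi => ?_, fun j hj => ?_⟩
  · refine row_mem_of_tessellation .refl (fun _ _ => DRow.append)
      (fun d hd => (hbounds d hd).2.2.2) hpart (fun d hd i hi₁ hi₂ => ?_) hi
    have := (hsub d hd).2.2.1 (i - d.1) (by omega)
    rwa [row_subpic, Nat.add_sub_cancel' hi₁] at this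
  · refine row_mem_of_tessellation (p := fun s r => p r s) (ds := transposeDom ⁻¹' ds)
      .refl (fun _ _ => DCol.append)
      (fun d hd => (hbounds _ hd).2.1) (existsUnique_transposeDom hpart)
      (fun d hd j hj₁ hj₂ => ?_) hj
    have := (hsub _ hd).2.2.2 (j - d.1) (by simp only [transposeDom]; omega)
    simp only [col_subpic, transposeDom] at this
    rwa [Nat.add_sub_cancel' hj₁] at this
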